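/- arXiv:2308.08374 — 3 statements merged into one kernel-verified Lean document; each statement's English description precedes it below -/
import Mathlib

section
/- Let α be a pattern over Σ and X that contains a variable x occurring exactly once in α, and let h₀ be the substitution mapping every variable to the empty word. Then for every k ∈ ℕ, there exists a substitution h with ι(h(α)) = k if and only if ι(h₀(α)) ≤ k. -/
open List

section Defs

variable {α : Type*}

/-- A word `w` is `k`-universal if every word of length at most `k` is a subsequence of `w`. -/
def IsKUniversal [Fintype α] (k : ℕ) (w : List α) : Prop :=
  ∀ u : List α, u.length ≤ k → u.Sublist w

/-- The universality index `ι(w)`: the largest `k` such that `w` is `k`-universal. -/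
noncomputable def univIndex [Fintype α] (w : List α) : ℕ :=
  sSup {k | IsKUniversal k w}

/-- `c`-fold concatenation (power) of a word. -/
def wpow (u : List α) (c : ℕ) : List α := (List.replicate c u).flatten

/-- Auxiliary (fuelled) computation of the arch factorization: returns the list of
arches and the rest. Each arch is the shortest prefix of the remaining suffix
containing every letter of the alphabet. -/
noncomputable def archFactAux [Fintype α] [DecidableEq α] :
    ℕ → List α → List (List α) × List α
  | 0, w => ([], w)
  | fuel + 1, w =>
    if Finset.univ ⊆ w.toFinset then
      let n := sInf {n | Finset.univ ⊆ (w.take n).toFinset}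
      let p := archFactAux fuel (w.drop n)
      (w.take n :: p.1, p.2)
    else ([], w)

/-- The arch factorization of `w`: the list of arches together with the rest. -/
noncomputable def archFact [Fintype α] [DecidableEq α] (w : List α) :
    List (List α) × List α :=
  archFactAux w.length w

/-- `γ(w)`: the distinct letters of `w` in order of their first occurrence. -/
def gammaWord [DecidableEq α] (w : List α) : List α := w.reverse.dedup.reverse

/-- The suffix of `w` strictly after the first occurrence of the letter `a`. -/
def afterFirst [DecidableEq α] (a : α) (w : List α) : List α :=
  w.drop (w.idxOf a + 1)

/-- `ι_a(w)`: the universality index of the suffix of `w` after the first occurrence of `a`. -/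
noncomputable def iotaLetter [Fintype α] [DecidableEq α] (a : α) (w : List α) : ℕ :=
  univIndex (afterFirst a w)

/-- `R_a(w)`: the alphabet of the rest of the arch factorization of the suffix of `w`
after the first occurrence of `a`. -/
noncomputable def restLetter [Fintype α] [DecidableEq α] (a : α) (w : List α) : Finset α :=
  ((archFact (afterFirst a w)).2).toFinset

/-- `Subseq_k(w)`: the set of subsequences of `w` of length at most `k`. -/
def subseqK (k : ℕ) (w : List α) : Set (List α) :=
  {u | u.length ≤ k ∧ u.Sublist w}

/-- Simon's congruence `u ∼_k v`. -/
def SimonCongr (k : ℕ) (u v : List α) : Prop := subseqK k u = subseqK k v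

/-- Applying a substitution `h` to a pattern: replace each variable occurrence by its
image and leave terminal letters unchanged. -/
def applySub {X : Type*} (h : X → List α) (p : List (α ⊕ X)) : List α :=
  p.flatMap (Sum.elim (fun a => [a]) h)

/-- A permutation word of the alphabet: every letter occurs exactly once. -/
def IsPermWord [DecidableEq α] (γ : List α) : Prop :=
  ∀ a : α, γ.count a = 1

end Defs

/-!
Inserting a single letter into a word raises its universality index by at most one: if
`s ++ a :: t` is `(k+1)`-universal then `s ++ t` is `k`-universal. Substituting for the
once-occurring variable `x` the successive prefixes of the `k`-universal word `π^k` (`π` any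
permutation of `Σ`) therefore moves `ι` from `ι(h₀(α))` to at least `k` in steps of at most
one, so it hits `k` exactly. Conversely `h₀(α)` is a subsequence of every `h(α)`, and `ι` is monotone.
-/

-- `List.count` in the statement uses the derived `BEq` on `Sum`, which core ships without
-- a `LawfulBEq` instance.
instance {β γ : Type*} [BEq β] [BEq γ] [LawfulBEq β] [LawfulBEq γ] : LawfulBEq (β ⊕ γ) where
  eq_of_beq {a b} h := by
    cases a <;> cases b <;> first | cases h | exact congrArg _ (eq_of_beq h)
  rfl {a} := by
    cases a
    · exact beq_self_eq_true (α := β) _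
    · exact beq_self_eq_true (α := γ) _

theorem exists_eq_append_cons_of_count_eq_one {β : Type*} [BEq β] [LawfulBEq β] {a : β}
    {l : List β} (h : l.count a = 1) : ∃ l₁ l₂, l = l₁ ++ a :: l₂ ∧ a ∉ l₁ ∧ a ∉ l₂ := by
  obtain ⟨l₁, l₂, ha₁, rfl, -⟩ := exists_erase_eq (count_pos_iff.mp (h ▸ Nat.one_pos))
  refine ⟨l₁, l₂, rfl, ha₁, count_eq_zero.mp ?_⟩
  rw [count_append, count_cons_self, count_eq_zero.mpr ha₁] at h
  omega

theorem cons_sublist_of_cons_sublist_append {β : Type*} {b : β} {v s r : List β} (hb : b ∉ s)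
    (h : b :: v <+ s ++ r) : b :: v <+ r := by
  obtain ⟨_ | ⟨c, l₁⟩, l₂, hbv, h₁, h₂⟩ := sublist_append_iff.mp h
  · exact (nil_append l₂ ▸ hbv) ▸ h₂
  · obtain ⟨rfl, -⟩ := cons_eq_cons.mp (cons_append ▸ hbv)
    exact absurd (h₁.subset mem_cons_self) hb

theorem exists_eq_of_le_of_le_of_map_succ_le {g : ℕ → ℕ} {k N : ℕ} (h₀ : g 0 ≤ k)
    (hN : k ≤ g N) (hg : ∀ j, g (j + 1) ≤ g j + 1) : ∃ j, g j = k := by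
  have hex : ∃ j, k ≤ g j := ⟨N, hN⟩
  refine ⟨Nat.find hex, le_antisymm ?_ (Nat.find_spec hex)⟩
  rcases hj : Nat.find hex with _ | i
  · exact h₀
  · have hi : g i < k := not_le.mp (Nat.find_min hex (by omega))
    exact (hg i).trans hi

section Universality

variable {α : Type*} [Fintype α]

theorem isKUniversal_zero (w : List α) : IsKUniversal 0 w := fun u hu => by
  rw [length_eq_zero_iff.mp (Nat.le_zero.mp hu)]
  exact nil_sublist w

theorem IsKUniversal.mono {k j : ℕ} {w : List α} (h : IsKUniversal k w) (hj : j ≤ k) :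
    IsKUniversal j w := fun u hu => h u (hu.trans hj)

theorem isKUniversal_wpow {u : List α} (hu : ∀ b, b ∈ u) (k : ℕ) :
    IsKUniversal k (wpow u k) := by
  induction k with
  | zero => exact isKUniversal_zero _
  | succ k ih =>
    rintro (_ | ⟨b, v⟩) hv
    · exact nil_sublist _
    · have hwpow : wpow u (k + 1) = u ++ wpow u k := by simp [wpow, replicate_succ]
      rw [hwpow, ← singleton_append]
      exact (singleton_sublist.mpr (hu b)).append (ih v (by simpa using hv))

theorem IsKUniversal.of_append_cons {k : ℕ} {s t : List α} {a : α}
    (h : IsKUniversal (k + 1) (s ++ a :: t)) : IsKUniversal k (s ++ t) := by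
  classical
  induction k generalizing s with
  | zero => exact isKUniversal_zero _
  | succ k ih =>
    rintro (_ | ⟨b, v⟩) hv
    · exact nil_sublist _
    replace hv : v.length ≤ k := by simpa using hv
    by_cases hbs : b ∈ s
    · -- cut `s` at the first occurrence of `b`; what follows it is still `(k+1)`-universal
      obtain ⟨s₁, s₂, hb₁, rfl, -⟩ := exists_erase_eq hbs
      have hs₂ : IsKUniversal (k + 1) (s₂ ++ a :: t) := fun v' hv' => by
        have := h (b :: v') (by simpa using hv')
        rw [append_assoc, cons_append] at this
        exact cons_sublist_cons.mp (cons_sublist_of_cons_sublist_append hb₁ this)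
      have := ((ih hs₂ v hv).cons_cons b).trans (sublist_append_right s₁ _)
      simpa using this
    · by_cases hba : b = a
      · subst hba
        have := h (b :: b :: v) (by simpa using hv)
        exact (cons_sublist_cons.mp (cons_sublist_of_cons_sublist_append hbs this)).trans
          (sublist_append_right s t)
      · have := h (b :: v) (by simpa using hv.trans (Nat.le_succ k))
        rw [show s ++ a :: t = (s ++ [a]) ++ t by simp] at this
        exact (cons_sublist_of_cons_sublist_append (by simp [hbs, hba]) this).trans
          (sublist_append_right s t)

variable [Nonempty α]

theorem IsKUniversal.le_length {k : ℕ} {w : List α} (h : IsKUniversal k w) : k ≤ w.length := by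
  obtain ⟨a⟩ := ‹Nonempty α›
  simpa using (h (replicate k a) (by simp)).length_le

theorem le_univIndex_iff {k : ℕ} {w : List α} : k ≤ univIndex w ↔ IsKUniversal k w := by
  have hbdd : BddAbove {k | IsKUniversal k w} := ⟨w.length, fun _ hk => hk.le_length⟩
  refine ⟨fun h => ?_, fun h => le_csSup hbdd h⟩
  exact IsKUniversal.mono (Nat.sSup_mem ⟨0, isKUniversal_zero w⟩ hbdd) h

theorem univIndex_le_of_sublist {u w : List α} (h : u <+ w) : univIndex u ≤ univIndex w :=
  le_univIndex_iff.mpr fun v hv => (le_univIndex_iff.mp le_rfl v hv).trans h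

theorem univIndex_append_cons_le (s t : List α) (a : α) :
    univIndex (s ++ a :: t) ≤ univIndex (s ++ t) + 1 := by
  rcases hn : univIndex (s ++ a :: t) with _ | k
  · exact Nat.zero_le _
  · exact Nat.succ_le_succ (le_univIndex_iff.mpr (le_univIndex_iff.mp hn.ge).of_append_cons)

theorem exists_univIndex_append_take_append_eq {A B m : List α} {k : ℕ}
    (hlo : univIndex (A ++ B) ≤ k) (hhi : k ≤ univIndex m) :
    ∃ j, univIndex (A ++ m.take j ++ B) = k := by
  refine exists_eq_of_le_of_le_of_map_succ_le (N := m.length) (by simpa using hlo) ?_ fun j => ?_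
  · rw [take_length]
    exact hhi.trans (univIndex_le_of_sublist (infix_append A m B).sublist)
  · rw [take_add_one]
    rcases m[j]? with _ | c
    · simp
    · simpa using univIndex_append_cons_le (A ++ m.take j) B c

end Universality

section Substitution

variable {α X : Type*}

theorem applySub_nil_sublist (h : X → List α) (p : List (α ⊕ X)) :
    applySub (fun _ => []) p <+ applySub h p :=
  Sublist.flatMap_right p fun e _ => by cases e <;> simp

variable [DecidableEq X] (h : X → List α) {x : X} (m : List α)

theorem applySub_update_of_notMem {q : List (α ⊕ X)} (hq : Sum.inr x ∉ q) :
    applySub (Function.update h x m) q = applySub h q :=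
  flatMap_congr fun e he => by
    cases e with
    | inl a => rfl
    | inr y => simp [Function.update_of_ne (show y ≠ x by rintro rfl; exact hq he)]

theorem applySub_update_append_cons {p₁ p₂ : List (α ⊕ X)} (hx₁ : Sum.inr x ∉ p₁)
    (hx₂ : Sum.inr x ∉ p₂) :
    applySub (Function.update h x m) (p₁ ++ Sum.inr x :: p₂) =
      applySub h p₁ ++ m ++ applySub h p₂ := by
  have h₁ := applySub_update_of_notMem h m hx₁
  have h₂ := applySub_update_of_notMem h m hx₂
  simp only [applySub, flatMap_append, flatMap_cons] at h₁ h₂ ⊢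
  simp [h₁, h₂]

end Substitution

/-- if some variable occurs exactly once in the pattern `p`, then a
universality index of exactly `k` is reachable iff `k` is at least the universality
index of the image of `p` under the empty substitution. -/
theorem stmt3 {α X : Type*} [Fintype α] [DecidableEq α] [Nonempty α] [DecidableEq X]
    (p : List (α ⊕ X)) (x : X) (hx : p.count (Sum.inr x) = 1) (k : ℕ) :
    (∃ h : X → List α, univIndex (applySub h p) = k) ↔
      univIndex (applySub (fun _ : X => ([] : List α)) p) ≤ k := by
  refine ⟨fun ⟨h, hk⟩ => hk ▸ univIndex_le_of_sublist (applySub_nil_sublist h p), fun hk => ?_⟩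
  obtain ⟨p₁, p₂, rfl, hx₁, hx₂⟩ := exists_eq_append_cons_of_count_eq_one hx
  set h₀ : X → List α := fun _ => []
  have hsplit : applySub h₀ (p₁ ++ Sum.inr x :: p₂) = applySub h₀ p₁ ++ applySub h₀ p₂ := by
    simp [h₀, applySub]
  set m := wpow (Finset.univ : Finset α).toList k
  have hm : k ≤ univIndex m := le_univIndex_iff.mpr (isKUniversal_wpow (by simp) k)
  obtain ⟨j, hj⟩ := exists_univIndex_append_take_append_eq (hsplit ▸ hk) hm
  exact ⟨Function.update h₀ x (m.take j), by rwa [applySub_update_append_cons h₀ _ hx₁ hx₂]⟩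
end

section
/- Let γ be a permutation word of Σ. Then for every word w over Σ and every k ∈ ℕ, w is k-universal if and only if w ∼_k γ^k, where γ^k denotes the k-fold concatenation of γ. -/
open List

lemma wpow_succ {α : Type*} (u : List α) (k : ℕ) : wpow u (k + 1) = u ++ wpow u k := by
  simp only [wpow, replicate_succ, flatten_cons]

lemma IsPermWord.mem {α : Type*} [DecidableEq α] {γ : List α} (hγ : IsPermWord γ) (a : α) :
    a ∈ γ :=
  count_pos_iff.mp (by simp [hγ a])

lemma IsPermWord.isKUniversal_wpow {α : Type*} [Fintype α] [DecidableEq α] {γ : List α}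
    (hγ : IsPermWord γ) (k : ℕ) : IsKUniversal k (wpow γ k) := by
  induction k with
  | zero =>
    intro u hu
    simp [length_eq_zero_iff.mp (Nat.le_zero.mp hu)]
  | succ k ih =>
    rintro (_ | ⟨a, t⟩) hu
    · exact nil_sublist _
    · rw [wpow_succ]
      exact (singleton_sublist.mpr (hγ.mem a)).append (ih t (by simpa using hu))

lemma isKUniversal_iff_subseqK_eq {α : Type*} [Fintype α] {k : ℕ} {w : List α} :
    IsKUniversal k w ↔ subseqK k w = {u | u.length ≤ k} := by
  simp only [IsKUniversal, subseqK, Set.ext_iff, Set.mem_ofPred_eq, and_iff_left_iff_imp]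

theorem stmt12_general {α : Type*} [Fintype α] [DecidableEq α]
    (γ : List α) (hγ : IsPermWord γ) (w : List α) (k : ℕ) :
    IsKUniversal k w ↔ SimonCongr k w (wpow γ k) := by
  rw [SimonCongr, isKUniversal_iff_subseqK_eq.mp (hγ.isKUniversal_wpow k),
    isKUniversal_iff_subseqK_eq]

/-- `w` is `k`-universal iff `w ∼_k γ^k` for a permutation word `γ` of `Σ`. -/
theorem stmt12 {α : Type*} [Fintype α] [DecidableEq α] [Nonempty α]
    (γ : List α) (hγ : IsPermWord γ) (w : List α) (k : ℕ) :
    IsKUniversal k w ↔ SimonCongr k w (wpow γ k) :=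
  stmt12_general γ hγ w k
end

section
/- Let u be a word over Σ whose arch factorization has empty rest, i.e., r(u) = ε. Then for every word v over Σ, ι(uv) = ι(u) + ι(v). -/
open List

/-!
The universality index of a word is its number of arches. A word of length at most `m` embeds
letter by letter, one letter per arch; conversely the word formed by the last letters of the
`m` arches followed by a letter missing from the rest is not a subsequence, since the last letter
of an arch does not occur earlier in that arch, so a greedy embedding is forced through the
arches one by one. If the rest of `u` is empty, every arch of `u` is a shortest full prefix
lying inside `u`, so the arches of `u ++ v` are those of `u` followed by those of `v`.
-/

lemma sublist_of_cons_sublist_append_cons {α : Type*} {c : α} {x p t : List α} (hc : c ∉ p)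
    (h : (c :: x).Sublist (p ++ c :: t)) : x.Sublist t := by
  induction p with
  | nil => exact cons_sublist_cons.mp h
  | cons a p ih =>
    rw [mem_cons, not_or] at hc
    rcases sublist_cons_iff.mp h with h | ⟨r, hr, -⟩
    · exact ih hc.2 h
    · exact absurd (cons_eq_cons.mp hr).1 hc.1

lemma univIndex_eq_of_isKUniversal {α : Type*} [Fintype α] {w : List α} {m : ℕ}
    (hm : IsKUniversal m w) (hm' : ¬ IsKUniversal (m + 1) w) : univIndex w = m := by
  have hbound : ∀ k ∈ {k | IsKUniversal k w}, k ≤ m := fun k hk =>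
    not_lt.mp fun hlt => hm' fun x hx => hk x (hx.trans hlt)
  exact le_antisymm (csSup_le ⟨m, hm⟩ hbound) (le_csSup ⟨m, hbound⟩ hm)

section ArchFactorization

variable {α : Type*} [Fintype α] [DecidableEq α]

noncomputable def firstArchLength (w : List α) : ℕ :=
  sInf {n | Finset.univ ⊆ (w.take n).toFinset}

lemma not_univ_subset_toFinset_nil [Nonempty α] : ¬ Finset.univ ⊆ ([] : List α).toFinset :=
  fun h => by simpa using h (Finset.mem_univ (Classical.arbitrary α))

lemma firstArchLength_le_length {w : List α} (h : Finset.univ ⊆ w.toFinset) :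
    firstArchLength w ≤ w.length :=
  Nat.sInf_le (show Finset.univ ⊆ (w.take w.length).toFinset by rwa [take_length])

lemma univ_subset_toFinset_take_firstArchLength {w : List α} (h : Finset.univ ⊆ w.toFinset) :
    Finset.univ ⊆ (w.take (firstArchLength w)).toFinset :=
  Nat.sInf_mem (s := {n | Finset.univ ⊆ (w.take n).toFinset})
    ⟨w.length, show Finset.univ ⊆ (w.take w.length).toFinset by rwa [take_length]⟩

lemma firstArchLength_pos [Nonempty α] {w : List α} (h : Finset.univ ⊆ w.toFinset) :
    0 < firstArchLength w := by
  have hfull := univ_subset_toFinset_take_firstArchLength h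
  refine Nat.pos_of_ne_zero fun h0 => not_univ_subset_toFinset_nil (α := α) ?_
  rwa [h0, take_zero] at hfull

lemma exists_take_firstArchLength_eq [Nonempty α] {w : List α} (h : Finset.univ ⊆ w.toFinset) :
    ∃ p c, w.take (firstArchLength w) = p ++ [c] ∧ c ∉ p := by
  obtain ⟨m, hm⟩ : ∃ m, firstArchLength w = m + 1 :=
    Nat.exists_eq_add_one.mpr (firstArchLength_pos h)
  have hlt : m < w.length := by have := firstArchLength_le_length h; omega
  have htake : w.take (firstArchLength w) = w.take m ++ [w[m]] := by
    rw [hm, take_concat_get']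
  obtain ⟨x, -, hx⟩ := Finset.not_subset.mp
    (Nat.notMem_of_lt_sInf (show m < firstArchLength w by omega))
  have hx' := univ_subset_toFinset_take_firstArchLength h (Finset.mem_univ x)
  rw [htake, mem_toFinset, mem_append, mem_singleton] at hx'
  rw [mem_toFinset] at hx
  exact ⟨w.take m, w[m], htake, hx'.resolve_left hx ▸ hx⟩

lemma firstArchLength_append {u : List α} (hu : Finset.univ ⊆ u.toFinset) (v : List α) :
    firstArchLength (u ++ v) = firstArchLength u := by
  have hle := firstArchLength_le_length hu
  have huv : Finset.univ ⊆ (u ++ v).toFinset := by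
    rw [toFinset_append]; exact hu.trans Finset.subset_union_left
  have hle' : firstArchLength (u ++ v) ≤ firstArchLength u := by
    apply Nat.sInf_le
    show Finset.univ ⊆ ((u ++ v).take (firstArchLength u)).toFinset
    rw [take_append_of_le_length hle]
    exact univ_subset_toFinset_take_firstArchLength hu
  refine le_antisymm hle' (Nat.sInf_le ?_)
  show Finset.univ ⊆ (u.take (firstArchLength (u ++ v))).toFinset
  rw [← take_append_of_le_length (l₂ := v) (hle'.trans hle)]
  exact univ_subset_toFinset_take_firstArchLength huv

variable [Nonempty α]

lemma length_drop_firstArchLength_lt {w : List α} (h : Finset.univ ⊆ w.toFinset) :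
    (w.drop (firstArchLength w)).length < w.length := by
  have := firstArchLength_pos h
  have := firstArchLength_le_length h
  rw [length_drop]
  omega

lemma archFactAux_nil (fuel : ℕ) : archFactAux fuel ([] : List α) = ([], []) := by
  cases fuel with
  | zero => rfl
  | succ fuel => simp only [archFactAux, if_neg not_univ_subset_toFinset_nil]

omit [Nonempty α] in
lemma archFactAux_succ_of_univ_subset (fuel : ℕ) {w : List α} (h : Finset.univ ⊆ w.toFinset) :
    archFactAux (fuel + 1) w =
      (w.take (firstArchLength w) :: (archFactAux fuel (w.drop (firstArchLength w))).1,
        (archFactAux fuel (w.drop (firstArchLength w))).2) := by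
  rw [archFactAux, if_pos h]
  rfl

lemma archFactAux_eq_archFact {fuel : ℕ} {w : List α} (hw : w.length ≤ fuel) :
    archFactAux fuel w = archFact w := by
  suffices key : ∀ fuel fuel' (w : List α), w.length ≤ fuel → w.length ≤ fuel' →
      archFactAux fuel w = archFactAux fuel' w from key _ _ w hw le_rfl
  intro fuel
  induction fuel with
  | zero =>
    intro fuel' w hw _
    rw [eq_nil_of_length_eq_zero (Nat.le_zero.mp hw), archFactAux_nil, archFactAux_nil]
  | succ fuel ih =>
    intro fuel' w hw hw'
    cases fuel' with
    | zero =>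
      rw [eq_nil_of_length_eq_zero (Nat.le_zero.mp hw'), archFactAux_nil, archFactAux_nil]
    | succ fuel' =>
      by_cases h : Finset.univ ⊆ w.toFinset
      · have hlt := length_drop_firstArchLength_lt h
        rw [archFactAux_succ_of_univ_subset _ h, archFactAux_succ_of_univ_subset _ h,
          ih fuel' _ (Nat.le_of_lt_succ (hlt.trans_le hw)) (Nat.le_of_lt_succ (hlt.trans_le hw'))]
      · simp only [archFactAux, if_neg h]

lemma archFact_of_not_univ_subset {w : List α} (h : ¬ Finset.univ ⊆ w.toFinset) :
    archFact w = ([], w) := by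
  cases w with
  | nil => exact archFactAux_nil 0
  | cons a t => simp only [archFact, length_cons, archFactAux, if_neg h]

lemma archFact_of_univ_subset {w : List α} (h : Finset.univ ⊆ w.toFinset) :
    archFact w = (w.take (firstArchLength w) :: (archFact (w.drop (firstArchLength w))).1,
      (archFact (w.drop (firstArchLength w))).2) := by
  have hlt := length_drop_firstArchLength_lt h
  obtain ⟨a, t, rfl⟩ := exists_cons_of_ne_nil (ne_nil_of_length_pos (Nat.zero_lt_of_lt hlt))
  rw [archFact, length_cons, archFactAux_succ_of_univ_subset _ h,
    archFactAux_eq_archFact (Nat.le_of_lt_succ hlt)]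

lemma isKUniversal_length_archFact (w : List α) :
    IsKUniversal (archFact w).1.length w := by
  by_cases h : Finset.univ ⊆ w.toFinset
  · have ih := isKUniversal_length_archFact (w.drop (firstArchLength w))
    intro x hx
    rw [archFact_of_univ_subset h, length_cons] at hx
    rcases x with _ | ⟨b, x⟩
    · exact nil_sublist w
    · rw [← take_append_drop (firstArchLength w) w]
      refine cons_sublist_iff.mpr ⟨_, _, rfl, ?_, ih x (by simpa using hx)⟩
      exact mem_toFinset.mp (univ_subset_toFinset_take_firstArchLength h (Finset.mem_univ b))
  · intro x hx
    rw [archFact_of_not_univ_subset h, length_nil, Nat.le_zero, length_eq_zero_iff] at hx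
    exact hx ▸ nil_sublist w
termination_by w.length
decreasing_by exact length_drop_firstArchLength_lt h

lemma exists_length_eq_length_archFact_add_one_not_sublist (w : List α) :
    ∃ x : List α, x.length = (archFact w).1.length + 1 ∧ ¬ x.Sublist w := by
  by_cases h : Finset.univ ⊆ w.toFinset
  · obtain ⟨x, hlen, hx⟩ :=
      exists_length_eq_length_archFact_add_one_not_sublist (w.drop (firstArchLength w))
    obtain ⟨p, c, hpc, hc⟩ := exists_take_firstArchLength_eq h
    refine ⟨c :: x, by rw [archFact_of_univ_subset h]; simpa using hlen, fun hsub => hx ?_⟩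
    rw [← take_append_drop (firstArchLength w) w, hpc, append_assoc, singleton_append] at hsub
    exact sublist_of_cons_sublist_append_cons hc hsub
  · obtain ⟨c, -, hc⟩ := Finset.not_subset.mp h
    refine ⟨[c], by simp [archFact_of_not_univ_subset h], fun hsub => hc ?_⟩
    exact mem_toFinset.mpr (singleton_sublist.mp hsub)
termination_by w.length
decreasing_by exact length_drop_firstArchLength_lt h

theorem univIndex_eq_length_archFact (w : List α) : univIndex w = (archFact w).1.length := by
  obtain ⟨x, hlen, hx⟩ := exists_length_eq_length_archFact_add_one_not_sublist w
  exact univIndex_eq_of_isKUniversal (isKUniversal_length_archFact w)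
    fun h => hx (h x hlen.le)

theorem archFact_append_fst {u : List α} (hu : (archFact u).2 = []) (v : List α) :
    (archFact (u ++ v)).1 = (archFact u).1 ++ (archFact v).1 := by
  by_cases h : Finset.univ ⊆ u.toFinset
  · have hle := firstArchLength_le_length h
    have huv : Finset.univ ⊆ (u ++ v).toFinset := by
      rw [toFinset_append]; exact h.trans Finset.subset_union_left
    rw [archFact_of_univ_subset h] at hu ⊢
    rw [archFact_of_univ_subset huv, firstArchLength_append h, take_append_of_le_length hle,
      drop_append_of_le_length hle, archFact_append_fst hu v, cons_append]
  · rw [archFact_of_not_univ_subset h] at hu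
    subst hu
    rw [archFact_of_not_univ_subset h, nil_append, nil_append]
termination_by u.length
decreasing_by exact length_drop_firstArchLength_lt h

end ArchFactorization

/-- if the rest of the arch factorization of `u` is empty, then the
universality index is additive on `u ++ v`. -/
theorem stmt18 {α : Type*} [Fintype α] [DecidableEq α] [Nonempty α]
    (u : List α) (hu : (archFact u).2 = []) (v : List α) :
    univIndex (u ++ v) = univIndex u + univIndex v := by
  rw [univIndex_eq_length_archFact, univIndex_eq_length_archFact, univIndex_eq_length_archFact,
    archFact_append_fst hu, length_append]
end
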